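/- Let ι be a finite nonempty type, L ≥ 0, δ ≥ 0, α ∈ [0, 1), and let F be a real-valued function on probability distributions on ι with |F(p) − F(q)| ≤ L·TV(p, q) for all p, q. Let (p_t)_{t ≥ 0} be strictly positive probability distributions on ι with KL(p_t ‖ p_{t−1}) ≤ δ for a fixed index t ≥ 1, and TV(p_{r+1}, p_r) ≤ α·TV(p_r, p_{r−1}) for all r ≥ t. Then sup_{s ≥ 1} |F(p_{t+s}) − F(p_t)| ≤ (L/(1 − α))·√(δ/2). -/

import Mathlib

/-- A probability distribution on a finite type: nonnegative and sums to 1. -/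
def IsProbDist {ι : Type*} [Fintype ι] (p : ι → ℝ) : Prop :=
  (∀ i, 0 ≤ p i) ∧ ∑ i, p i = 1

/-- Total variation distance between two functions on a finite type. -/
noncomputable def TV {ι : Type*} [Fintype ι] (p q : ι → ℝ) : ℝ :=
  (1 / 2) * ∑ i, |p i - q i|

/-- Kullback–Leibler divergence on a finite type (terms with `p i = 0` contribute `0`,
since `Real.log 0 = 0`). -/
noncomputable def KL {ι : Type*} [Fintype ι] (p q : ι → ℝ) : ℝ :=
  ∑ i, p i * Real.log (p i / q i)

/-- `log x ≥ 2(x-1)/(x+1)` for `x ≥ 1`. -/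
lemma log_ge_aux {x : ℝ} (hx : 1 ≤ x) : 2 * (x - 1) / (x + 1) ≤ Real.log x := by
  have key : MonotoneOn (fun y : ℝ => Real.log y - 2 * (y - 1) / (y + 1)) (Set.Ici 1) := by
    apply monotoneOn_of_hasDerivWithinAt_nonneg (f' := fun y => 1/y - 4/(y+1)^2)
      (convex_Ici 1)
    · apply ContinuousOn.sub
      · exact Real.continuousOn_log.mono (by intro y hy; simp at hy ⊢; nlinarith)
      · exact ContinuousOn.div (by fun_prop) (by fun_prop)
          (fun y hy => by simp at hy; nlinarith)
    · intro y hy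
      rw [interior_Ici] at hy
      simp only [Set.mem_Ioi] at hy
      have hy0 : (0:ℝ) < y := by linarith
      have hy1 : y + 1 ≠ 0 := by positivity
      have h1 : HasDerivAt Real.log (1/y) y := by
        simpa [one_div] using Real.hasDerivAt_log hy0.ne'
      have h2 : HasDerivAt (fun y : ℝ => 2 * (y - 1) / (y + 1))
          ((2 * 1 * (y + 1) - 2 * (y - 1) * 1) / (y + 1)^2) y := by
        simpa using (((hasDerivAt_id y).sub_const 1).const_mul 2).fun_div
          ((hasDerivAt_id y).add_const 1) hy1
      have := (h1.sub h2).hasDerivWithinAt (s := interior (Set.Ici (1:ℝ)))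
      refine this.congr_deriv ?_
      ring
    · intro y hy
      rw [interior_Ici] at hy
      simp only [Set.mem_Ioi] at hy
      have hy0 : (0:ℝ) < y := by linarith
      rw [sub_nonneg, div_le_div_iff₀ (by positivity) hy0]
      nlinarith
  have := key (Set.mem_Ici.2 le_rfl) (Set.mem_Ici.2 hx) hx
  simp at this
  linarith

/-- `log x ≤ 2(x-1)/(x+1)` for `0 < x ≤ 1`. -/
lemma log_le_aux {x : ℝ} (hx : 0 < x) (hx1 : x ≤ 1) :
    Real.log x ≤ 2 * (x - 1) / (x + 1) := by
  have h1 : (1:ℝ) ≤ 1/x := one_le_one_div hx hx1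
  have := log_ge_aux h1
  rw [one_div, Real.log_inv] at this
  have hx1' : (0:ℝ) < x + 1 := by linarith
  have hxx : x⁻¹ * x = 1 := inv_mul_cancel₀ hx.ne'
  have hinv : (0:ℝ) < x⁻¹ + 1 := by positivity
  have heq : 2 * (x⁻¹ - 1) / (x⁻¹ + 1) = 2 * (1 - x) / (x + 1) := by
    rw [div_eq_div_iff (by positivity) (by positivity)]
    linear_combination (4:ℝ) * hxx
  rw [heq] at this
  have h2 : 2 * (x - 1) / (x + 1) = -(2 * (1 - x) / (x + 1)) := by ring
  linarith

/-- Pointwise key inequality: `x log x - x + 1 ≥ 3(x-1)²/(2(x+2))` for `x > 0`. -/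
lemma key_pointwise {x : ℝ} (hx : 0 < x) :
    3 * (x - 1)^2 / (2 * (x + 2)) ≤ x * Real.log x - x + 1 := by
  set f : ℝ → ℝ := fun y => y * Real.log y - y + 1 - 3 * (y - 1)^2 / (2 * (y + 2)) with hf
  set f' : ℝ → ℝ := fun y => Real.log y - 3 * (y - 1) * (y + 5) / (2 * (y + 2)^2) with hf'
  have hderiv : ∀ y : ℝ, 0 < y → HasDerivAt f (f' y) y := by
    intro y hy
    have hy2 : (2:ℝ) * (y + 2) ≠ 0 := by positivity
    have h1 : HasDerivAt (fun y : ℝ => y * Real.log y) (1 * Real.log y + y * y⁻¹) y :=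
      (hasDerivAt_id y).mul (Real.hasDerivAt_log hy.ne')
    have h2 : HasDerivAt (fun y : ℝ => 3 * (y - 1)^2 / (2 * (y + 2)))
        ((3 * (2 * (y - 1) * 1) * (2 * (y + 2)) - 3 * (y - 1)^2 * (2 * 1)) / (2 * (y + 2))^2)
        y := by
      have hu : HasDerivAt (fun y : ℝ => 3 * (y - 1)^2) (3 * (2 * (y - 1) * 1)) y := by
        exact (((hasDerivAt_id y).sub_const 1).pow 2).const_mul 3 |>.congr_deriv
          (by simp only [id_eq]; ring)
      have hv : HasDerivAt (fun y : ℝ => 2 * (y + 2)) (2 * 1) y :=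
        ((hasDerivAt_id y).add_const 2).const_mul 2
      exact hu.div hv hy2
    have := ((h1.sub (hasDerivAt_id y)).add_const 1).sub h2
    refine this.congr_deriv ?_
    rw [hf']
    have hyne : y ≠ 0 := hy.ne'
    field_simp
    ring
  have hmono : MonotoneOn f (Set.Ici 1) := by
    apply monotoneOn_of_hasDerivWithinAt_nonneg (f' := f') (convex_Ici 1)
    · intro y hy
      simp only [Set.mem_Ici] at hy
      exact ((hderiv y (by linarith)).continuousAt).continuousWithinAt
    · intro y hy
      rw [interior_Ici] at hy
      exact (hderiv y (by simp at hy; linarith)).hasDerivWithinAt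
    · intro y hy
      rw [interior_Ici, Set.mem_Ioi] at hy
      have hy0 : (0:ℝ) < y := by linarith
      have hlog := log_ge_aux hy.le
      have hrat : 3 * (y - 1) * (y + 5) / (2 * (y + 2)^2) ≤ 2 * (y - 1) / (y + 1) := by
        rw [div_le_div_iff₀ (by positivity) (by positivity)]
        nlinarith [sq_nonneg (y - 1), mul_nonneg (sq_nonneg (y-1)) (sub_nonneg.2 hy.le)]
      simp only [hf']
      linarith
  have hanti : AntitoneOn f (Set.Ioc 0 1) := by
    apply antitoneOn_of_hasDerivWithinAt_nonpos (f' := f') (convex_Ioc 0 1)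
    · intro y hy
      exact ((hderiv y hy.1).continuousAt).continuousWithinAt
    · intro y hy
      rw [interior_Ioc] at hy
      exact (hderiv y hy.1).hasDerivWithinAt
    · intro y hy
      rw [interior_Ioc, Set.mem_Ioo] at hy
      obtain ⟨hy0, hy1⟩ := hy
      have hlog := log_le_aux hy0 hy1.le
      have hrat : 2 * (y - 1) / (y + 1) ≤ 3 * (y - 1) * (y + 5) / (2 * (y + 2)^2) := by
        rw [div_le_div_iff₀ (by positivity) (by positivity)]
        nlinarith [sq_nonneg (y - 1), mul_nonpos_of_nonpos_of_nonneg
          (sub_nonpos.2 hy1.le) (sq_nonneg (y-1))]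
      simp only [hf']
      linarith
  have hf1 : f 1 = 0 := by simp [hf]
  have : 0 ≤ f x := by
    rcases le_or_gt 1 x with h | h
    · have := hmono (Set.mem_Ici.2 le_rfl) (Set.mem_Ici.2 h) h
      rw [hf1] at this; exact this
    · have := hanti (Set.mem_Ioc.2 ⟨hx, h.le⟩) (Set.mem_Ioc.2 ⟨zero_lt_one, le_rfl⟩) h.le
      rw [hf1] at this; exact this
  simp only [hf] at this
  linarith

lemma TV_nonneg {ι : Type*} [Fintype ι] (p q : ι → ℝ) : 0 ≤ TV p q := by
  unfold TV
  have : 0 ≤ ∑ i, |p i - q i| := Finset.sum_nonneg fun i _ => abs_nonneg _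
  linarith

/-- Pinsker's inequality on a finite type. -/
lemma pinsker {ι : Type*} [Fintype ι] {p q : ι → ℝ}
    (hp : IsProbDist p) (hq : IsProbDist q)
    (hppos : ∀ i, 0 < p i) (hqpos : ∀ i, 0 < q i) :
    TV p q ≤ Real.sqrt (KL p q / 2) := by
  set S : ℝ := ∑ i, (p i - q i)^2 / (p i + 2 * q i) with hS
  have hterm : ∀ i, p i - q i + (3/2) * ((p i - q i)^2 / (p i + 2 * q i))
      ≤ p i * Real.log (p i / q i) := by
    intro i
    have ha := hppos i
    have hb := hqpos i
    have hbne : q i ≠ 0 := hb.ne'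
    have hx : 0 < p i / q i := div_pos ha hb
    have key := key_pointwise hx
    have h2 := mul_le_mul_of_nonneg_left key hb.le
    have e1 : q i * (3 * (p i / q i - 1)^2 / (2 * (p i / q i + 2)))
        = (3/2) * ((p i - q i)^2 / (p i + 2 * q i)) := by
      have hd1 : p i / q i + 2 ≠ 0 := by positivity
      have hd2 : p i + 2 * q i ≠ 0 := by positivity
      field_simp
    have e2 : q i * (p i / q i * Real.log (p i / q i) - p i / q i + 1)
        = p i * Real.log (p i / q i) - p i + q i := by
      field_simp
    rw [e1, e2] at h2
    linarith
  have hKLge : (3/2) * S ≤ KL p q := by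
    have hsum : ∑ i, (p i - q i + (3/2) * ((p i - q i)^2 / (p i + 2 * q i)))
        ≤ ∑ i, p i * Real.log (p i / q i) :=
      Finset.sum_le_sum fun i _ => hterm i
    have : ∑ i, (p i - q i + (3/2) * ((p i - q i)^2 / (p i + 2 * q i)))
        = (3/2) * S := by
      rw [Finset.sum_add_distrib, Finset.sum_sub_distrib, hp.2, hq.2, ← Finset.mul_sum]
      ring
    rw [this] at hsum
    exact hsum
  have hCS : (∑ i, |p i - q i|)^2 ≤ S * 3 := by
    have h3 : ∑ i, (p i + 2 * q i) = 3 := by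
      rw [Finset.sum_add_distrib, hp.2, ← Finset.mul_sum, hq.2]
      norm_num
    have := Finset.sum_mul_sq_le_sq_mul_sq Finset.univ
      (fun i => |p i - q i| / Real.sqrt (p i + 2 * q i))
      (fun i => Real.sqrt (p i + 2 * q i))
    have e1 : ∀ i : ι, |p i - q i| / Real.sqrt (p i + 2 * q i) * Real.sqrt (p i + 2 * q i)
        = |p i - q i| := by
      intro i
      have : (0:ℝ) < p i + 2 * q i := by have := hppos i; have := hqpos i; linarith
      exact div_mul_cancel₀ _ (Real.sqrt_ne_zero'.2 this).symm.symm
    have e2 : ∀ i : ι, (|p i - q i| / Real.sqrt (p i + 2 * q i))^2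
        = (p i - q i)^2 / (p i + 2 * q i) := by
      intro i
      have hpos : (0:ℝ) < p i + 2 * q i := by have := hppos i; have := hqpos i; linarith
      rw [div_pow, sq_abs, Real.sq_sqrt hpos.le]
    have e3 : ∀ i : ι, (Real.sqrt (p i + 2 * q i))^2 = p i + 2 * q i := by
      intro i
      have hpos : (0:ℝ) < p i + 2 * q i := by have := hppos i; have := hqpos i; linarith
      exact Real.sq_sqrt hpos.le
    simp only [e1, e2, e3] at this
    rw [h3] at this
    exact this
  have hfinal : (TV p q)^2 ≤ KL p q / 2 := by
    have htv : TV p q = (1/2) * ∑ i, |p i - q i| := rfl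
    rw [htv]
    nlinarith [hCS, hKLge]
  calc TV p q = Real.sqrt ((TV p q)^2) := (Real.sqrt_sq (TV_nonneg p q)).symm
    _ ≤ Real.sqrt (KL p q / 2) := Real.sqrt_le_sqrt hfinal

/-- Stability of Lipschitz functionals, tail part.
If `F` is `L`-Lipschitz w.r.t. TV on probability distributions,
`KL (p t) (p (t-1)) ≤ δ`, and `TV (p (r+1)) (p r) ≤ α · TV (p r) (p (r-1))` for all
`r ≥ t`, then `sup_{s ≥ 1} |F (p (t+s)) − F (p t)| ≤ (L/(1−α))·√(δ/2)`. -/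
theorem lipschitz_functional_tail_stability
    {ι : Type*} [Fintype ι] [Nonempty ι]
    (L δ α : ℝ) (hL : 0 ≤ L) (hδ : 0 ≤ δ) (hα : α ∈ Set.Ico (0 : ℝ) 1)
    (F : (ι → ℝ) → ℝ)
    (hF : ∀ p q : ι → ℝ, IsProbDist p → IsProbDist q → |F p - F q| ≤ L * TV p q)
    (t : ℕ) (ht : 1 ≤ t)
    (p : ℕ → ι → ℝ) (hprob : ∀ u, IsProbDist (p u)) (hpos : ∀ u i, 0 < p u i)
    (hKL : KL (p t) (p (t - 1)) ≤ δ)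
    (hcontr : ∀ r ≥ t, TV (p (r + 1)) (p r) ≤ α * TV (p r) (p (r - 1))) :
    ∀ s ≥ 1, |F (p (t + s)) - F (p t)| ≤ L / (1 - α) * Real.sqrt (δ / 2) := by
  obtain ⟨hα0, hα1⟩ := hα
  have h1α : (0:ℝ) < 1 - α := by linarith
  set T : ℝ := TV (p t) (p (t - 1)) with hTdef
  have hTnn : 0 ≤ T := TV_nonneg _ _
  have hT : T ≤ Real.sqrt (δ / 2) := by
    calc T ≤ Real.sqrt (KL (p t) (p (t - 1)) / 2) :=
          pinsker (hprob t) (hprob (t - 1)) (hpos t) (hpos (t - 1))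
      _ ≤ Real.sqrt (δ / 2) := Real.sqrt_le_sqrt (by linarith)
  have hstep : ∀ k : ℕ, TV (p (t + k + 1)) (p (t + k)) ≤ α ^ (k + 1) * T := by
    intro k
    induction k with
    | zero => simpa using hcontr t le_rfl
    | succ n ih =>
      have hc := hcontr (t + n + 1) (by omega)
      have he : t + n + 1 - 1 = t + n := by omega
      rw [he] at hc
      calc TV (p (t + n + 1 + 1)) (p (t + n + 1)) ≤ α * TV (p (t + n + 1)) (p (t + n)) := hc
        _ ≤ α * (α ^ (n + 1) * T) := mul_le_mul_of_nonneg_left ih hα0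
        _ = α ^ (n + 1 + 1) * T := by ring
  have htel : ∀ s : ℕ, |F (p (t + s)) - F (p t)|
      ≤ L * ∑ k ∈ Finset.range s, TV (p (t + k + 1)) (p (t + k)) := by
    intro s
    induction s with
    | zero => simp
    | succ n ih =>
      have h1 : |F (p (t + n + 1)) - F (p t)|
          ≤ |F (p (t + n + 1)) - F (p (t + n))| + |F (p (t + n)) - F (p t)| :=
        abs_sub_le _ _ _
      have h2 := hF (p (t + n + 1)) (p (t + n)) (hprob _) (hprob _)
      rw [Finset.sum_range_succ]
      have : t + (n + 1) = t + n + 1 := by omega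
      rw [this]
      have hgoal : L * (∑ k ∈ Finset.range n, TV (p (t + k + 1)) (p (t + k))
          + TV (p (t + n + 1)) (p (t + n)))
          = L * ∑ k ∈ Finset.range n, TV (p (t + k + 1)) (p (t + k))
          + L * TV (p (t + n + 1)) (p (t + n)) := by ring
      rw [hgoal]
      linarith
  intro s _
  have hsum : ∑ k ∈ Finset.range s, TV (p (t + k + 1)) (p (t + k)) ≤ T / (1 - α) := by
    have h1 : ∑ k ∈ Finset.range s, TV (p (t + k + 1)) (p (t + k))
        ≤ ∑ k ∈ Finset.range s, α ^ k * T := by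
      apply Finset.sum_le_sum
      intro k _
      calc TV (p (t + k + 1)) (p (t + k)) ≤ α ^ (k + 1) * T := hstep k
        _ ≤ α ^ k * T := by
          apply mul_le_mul_of_nonneg_right _ hTnn
          exact pow_le_pow_of_le_one hα0 hα1.le (by omega)
    have h2 : ∑ k ∈ Finset.range s, α ^ k * T = (∑ k ∈ Finset.range s, α ^ k) * T := by
      rw [Finset.sum_mul]
    have h3 : (∑ k ∈ Finset.range s, α ^ k) ≤ 1 / (1 - α) := by
      rw [le_div_iff₀ h1α]
      have := geom_sum_mul α s
      have hpow : 0 ≤ α ^ s := pow_nonneg hα0 s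
      nlinarith [this]
    have h4 : (∑ k ∈ Finset.range s, α ^ k) * T ≤ (1 / (1 - α)) * T :=
      mul_le_mul_of_nonneg_right h3 hTnn
    calc ∑ k ∈ Finset.range s, TV (p (t + k + 1)) (p (t + k))
        ≤ (∑ k ∈ Finset.range s, α ^ k) * T := by rw [← h2]; exact h1
      _ ≤ (1 / (1 - α)) * T := h4
      _ = T / (1 - α) := by ring
  calc |F (p (t + s)) - F (p t)|
      ≤ L * ∑ k ∈ Finset.range s, TV (p (t + k + 1)) (p (t + k)) := htel s
    _ ≤ L * (T / (1 - α)) := mul_le_mul_of_nonneg_left hsum hL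
    _ = (L / (1 - α)) * T := by ring
    _ ≤ L / (1 - α) * Real.sqrt (δ / 2) :=
        mul_le_mul_of_nonneg_left hT (div_nonneg hL h1α.le)
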